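/- arXiv:1006.4923 — 3 statements merged into one kernel-verified Lean document; each statement's English description precedes it below -/
import Mathlib

section
/- Let Γ be a knowledge base over V in which every formula γ ∈ Γ is 1-reproducing, i.e., γ evaluates to true on the all-true assignment. Let A ⊆ V and let φ be any formula. Then (Γ, A, φ) has a positive explanation if and only if A itself is a positive explanation, i.e., if and only if Γ ∧ A is satisfiable and every assignment satisfying Γ ∧ A satisfies φ. -/
/-!
The all-true assignment satisfies every 1-reproducing formula and every positive literal, so
`Γ ∧ A` is satisfiable; and enlarging a set of positive literals can only strengthen what it
entails, so any explanation `E ⊆ A` makes `A` an explanation as well.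
-/

/-- `σ` satisfies the knowledge base `Γ` (a set of formulas, each a Boolean function
on assignments). -/
def SatKB {V : Type*} (Γ : Set ((V → Bool) → Bool)) (σ : V → Bool) : Prop :=
  ∀ γ ∈ Γ, γ σ = true

/-- `E` is a positive explanation for the abduction instance `(Γ, A, φ)`:
a subset of `A` such that `Γ ∧ E` is satisfiable and entails `φ`. -/
def IsPosExplanation {V : Type*} (Γ : Set ((V → Bool) → Bool)) (A : Set V)
    (φ : (V → Bool) → Bool) (E : Set V) : Prop :=
  E ⊆ A ∧ (∃ σ, SatKB Γ σ ∧ ∀ x ∈ E, σ x = true) ∧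
    (∀ σ, SatKB Γ σ → (∀ x ∈ E, σ x = true) → φ σ = true)

section PositiveExplanation

variable {V : Type*} {Γ : Set ((V → Bool) → Bool)} {A E : Set V} {φ : (V → Bool) → Bool}

theorem exists_satKB_forall_true_of_oneReproducing (hrep : ∀ γ ∈ Γ, γ (fun _ => true) = true)
    (E : Set V) : ∃ σ, SatKB Γ σ ∧ ∀ x ∈ E, σ x = true :=
  ⟨fun _ => true, hrep, fun _ _ => rfl⟩

theorem isPosExplanation_self_iff :
    IsPosExplanation Γ A φ A ↔
      (∃ σ, SatKB Γ σ ∧ ∀ x ∈ A, σ x = true) ∧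
        ∀ σ, SatKB Γ σ → (∀ x ∈ A, σ x = true) → φ σ = true :=
  and_iff_right subset_rfl

theorem IsPosExplanation.ambient_entails (hE : IsPosExplanation Γ A φ E) :
    ∀ σ, SatKB Γ σ → (∀ x ∈ A, σ x = true) → φ σ = true :=
  fun σ hσ hσA => hE.2.2 σ hσ fun x hx => hσA x (hE.1 hx)

theorem exists_isPosExplanation_iff_self_of_oneReproducing
    (hrep : ∀ γ ∈ Γ, γ (fun _ => true) = true) :
    (∃ E : Set V, IsPosExplanation Γ A φ E) ↔ IsPosExplanation Γ A φ A :=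
  ⟨fun ⟨_, hE⟩ => isPosExplanation_self_iff.2
      ⟨exists_satKB_forall_true_of_oneReproducing hrep A, hE.ambient_entails⟩,
    fun hA => ⟨A, hA⟩⟩

end PositiveExplanation

theorem stmt_10_general (V : Type*) (Γ : Set ((V → Bool) → Bool))
    (hrep : ∀ γ ∈ Γ, γ (fun _ => true) = true)
    (A : Set V) (φ : (V → Bool) → Bool) :
    ((∃ E : Set V, IsPosExplanation Γ A φ E) ↔ IsPosExplanation Γ A φ A) ∧
    (IsPosExplanation Γ A φ A ↔
      ((∃ σ, SatKB Γ σ ∧ ∀ x ∈ A, σ x = true) ∧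
        (∀ σ, SatKB Γ σ → (∀ x ∈ A, σ x = true) → φ σ = true))) :=
  ⟨exists_isPosExplanation_iff_self_of_oneReproducing hrep, isPosExplanation_self_iff⟩

/-- For a 1-reproducing knowledge base, `(Γ, A, φ)` has a positive explanation iff `A`
itself is one, i.e. iff `Γ ∧ A` is satisfiable and entails `φ`. -/
theorem stmt_10 (V : Type*) (Γ : Set ((V → Bool) → Bool)) (hΓfin : Γ.Finite)
    (hrep : ∀ γ ∈ Γ, γ (fun _ => true) = true)
    (A : Set V) (φ : (V → Bool) → Bool) :
    ((∃ E : Set V, IsPosExplanation Γ A φ E) ↔ IsPosExplanation Γ A φ A) ∧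
    (IsPosExplanation Γ A φ A ↔
      ((∃ σ, SatKB Γ σ ∧ ∀ x ∈ A, σ x = true) ∧
        (∀ σ, SatKB Γ σ → (∀ x ∈ A, σ x = true) → φ σ = true))) :=
  stmt_10_general V Γ hrep A φ
end

section
/- Let φ = ⋀_{i ∈ I} cᵢ be a CNF over a variable set X in which every clause cᵢ is a nonempty disjunction of literals, and let q ∉ X be a fresh variable. Over V := X ∪ {q} define, for each i ∈ I, γᵢ := cᵢ ∨ q if cᵢ contains at least one negative literal, and γᵢ := cᵢ otherwise, and set Γ := { γᵢ : i ∈ I }. Then every γᵢ is 1-reproducing (satisfied by the all-true assignment), and φ is unsatisfiable if and only if (Γ, ∅, q) has an explanation, equivalently, if and only if Γ is satisfiable and Γ ⊨ q. -/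
/-- `σ` satisfies the set of literals given by positive part `P` and negative part `N`. -/
def SatLits {V : Type*} (σ : V → Bool) (P N : Set V) : Prop :=
  (∀ x ∈ P, σ x = true) ∧ (∀ x ∈ N, σ x = false)

/-- `(P, N)` is an explanation for the abduction instance `(Γ, A, φ)`. -/
def IsExplanation {V : Type*} (Γ : Set ((V → Bool) → Bool)) (A : Set V)
    (φ : (V → Bool) → Bool) (P N : Set V) : Prop :=
  P ⊆ A ∧ N ⊆ A ∧ Disjoint P N ∧
    (∃ σ, SatKB Γ σ ∧ SatLits σ P N) ∧
    (∀ σ, SatKB Γ σ → SatLits σ P N → φ σ = true)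

section Abduction

variable {V : Type*} {Γ : Set ((V → Bool) → Bool)} {φ : (V → Bool) → Bool}

theorem satKB_range_iff {I : Type*} {γ : I → (V → Bool) → Bool} {σ : V → Bool} :
    SatKB (Set.range γ) σ ↔ ∀ i, γ i σ = true :=
  Set.forall_mem_range

theorem exists_isExplanation_empty_iff :
    (∃ P N : Set V, IsExplanation Γ ∅ φ P N) ↔
      (∃ σ, SatKB Γ σ) ∧ ∀ σ, SatKB Γ σ → φ σ = true := by
  have hlits : ∀ σ : V → Bool, SatLits σ ∅ ∅ := fun _ => by simp [SatLits]
  constructor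
  · rintro ⟨P, N, hP, hN, -, ⟨σ, hσ, -⟩, hφ⟩
    obtain rfl : P = ∅ := Set.subset_empty_iff.1 hP
    obtain rfl : N = ∅ := Set.subset_empty_iff.1 hN
    exact ⟨⟨σ, hσ⟩, fun σ hσ => hφ σ hσ (hlits σ)⟩
  · rintro ⟨⟨σ, hσ⟩, hφ⟩
    exact ⟨∅, ∅, subset_rfl, subset_rfl, disjoint_bot_left, ⟨σ, hσ, hlits σ⟩,
      fun σ hσ _ => hφ σ hσ⟩

end Abduction

section GuardedClause

variable {X : Type*}

def guardedClause (c : Finset (X × Bool)) : (Option X → Bool) → Bool :=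
  if ∃ l ∈ c, l.2 = false then
    fun σ => decide (∃ l ∈ c, σ (some l.1) = l.2) || σ none
  else
    fun σ => decide (∃ l ∈ c, σ (some l.1) = l.2)

theorem guardedClause_apply_true {c : Finset (X × Bool)} (hc : c.Nonempty) :
    guardedClause c (fun _ => true) = true := by
  unfold guardedClause
  split_ifs with hneg
  · exact Bool.or_true _
  · simp only [not_exists, not_and, Bool.not_eq_false] at hneg
    obtain ⟨l, hl⟩ := hc
    exact decide_eq_true ⟨l, hl, (hneg l hl).symm⟩

theorem guardedClause_eq_true_of_none_false {c : Finset (X × Bool)} {σ : Option X → Bool}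
    (hq : σ none = false) :
    guardedClause c σ = true ↔ ∃ l ∈ c, σ (some l.1) = l.2 := by
  unfold guardedClause
  split_ifs <;> simp [hq]

theorem exists_satKB_guardedClause_none_false_iff {I : Type*} (C : I → Finset (X × Bool)) :
    (∃ σ, SatKB (Set.range fun i => guardedClause (C i)) σ ∧ σ none = false) ↔
      ∃ a : X → Bool, ∀ i, ∃ l ∈ C i, a l.1 = l.2 := by
  simp_rw [satKB_range_iff]
  constructor
  · rintro ⟨σ, hσ, hq⟩
    exact ⟨fun x => σ (some x), fun i => (guardedClause_eq_true_of_none_false hq).1 (hσ i)⟩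
  · rintro ⟨a, ha⟩
    exact ⟨fun o => o.elim false a,
      fun i => (guardedClause_eq_true_of_none_false rfl).2 (ha i), rfl⟩

end GuardedClause

/-- A clause is a finite set of literals (pairs of a variable and a polarity);
`none : Option X` plays the role of the fresh variable `q`. -/
theorem stmt_11_general (X : Type*) (I : Type*)
    (C : I → Finset (X × Bool)) (hC : ∀ i, (C i).Nonempty) :
    let γ : I → (Option X → Bool) → Bool := fun i =>
      if ∃ l ∈ C i, l.2 = false then
        fun σ : Option X → Bool => decide (∃ l ∈ C i, σ (some l.1) = l.2) || σ none
      else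
        fun σ : Option X → Bool => decide (∃ l ∈ C i, σ (some l.1) = l.2)
    let Γ : Set ((Option X → Bool) → Bool) := Set.range γ
    (∀ i : I, γ i (fun _ => true) = true) ∧
    ((¬ ∃ a : X → Bool, ∀ i : I, ∃ l ∈ C i, a l.1 = l.2) ↔
        ∃ P N : Set (Option X), IsExplanation Γ ∅ (fun σ => σ none) P N) ∧
    ((¬ ∃ a : X → Bool, ∀ i : I, ∃ l ∈ C i, a l.1 = l.2) ↔
        ((∃ σ, SatKB Γ σ) ∧ ∀ σ, SatKB Γ σ → σ none = true)) := by
  intro γ Γ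
  have hγ : γ = fun i => guardedClause (C i) := rfl
  have hΓsat : ∃ σ, SatKB Γ σ :=
    ⟨fun _ => true, satKB_range_iff.2 fun i => guardedClause_apply_true (hC i)⟩
  have hunsat_iff : (¬ ∃ a : X → Bool, ∀ i : I, ∃ l ∈ C i, a l.1 = l.2) ↔
      ∀ σ, SatKB Γ σ → σ none = true := by
    rw [← exists_satKB_guardedClause_none_false_iff, ← hγ]
    simp [Γ]
  refine ⟨fun i => guardedClause_apply_true (hC i), ?_, ?_⟩
  · rw [exists_isExplanation_empty_iff, hunsat_iff, and_iff_right hΓsat]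
  · rw [hunsat_iff, and_iff_right hΓsat]

/-- Reduction from UNSAT to positive abduction with a 1-reproducing knowledge base.
A clause is a nonempty finite set of literals (pairs of a variable and a polarity);
`none : Option X` plays the role of the fresh variable `q`. -/
theorem stmt_11 (X : Type*) [DecidableEq X] (I : Type*) [Fintype I]
    (C : I → Finset (X × Bool)) (hC : ∀ i, (C i).Nonempty) :
    let γ : I → (Option X → Bool) → Bool := fun i =>
      if ∃ l ∈ C i, l.2 = false then
        fun σ : Option X → Bool => decide (∃ l ∈ C i, σ (some l.1) = l.2) || σ none
      else
        fun σ : Option X → Bool => decide (∃ l ∈ C i, σ (some l.1) = l.2)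
    let Γ : Set ((Option X → Bool) → Bool) := Set.range γ
    (∀ i : I, γ i (fun _ => true) = true) ∧
    ((¬ ∃ a : X → Bool, ∀ i : I, ∃ l ∈ C i, a l.1 = l.2) ↔
        ∃ P N : Set (Option X), IsExplanation Γ ∅ (fun σ => σ none) P N) ∧
    ((¬ ∃ a : X → Bool, ∀ i : I, ∃ l ∈ C i, a l.1 = l.2) ↔
        ((∃ σ, SatKB Γ σ) ∧ ∀ σ, SatKB Γ σ → σ none = true)) :=
  stmt_11_general X I C hC
end

section
/- Let Γ be a knowledge base over V in which every formula γ ∈ Γ is monotone, let A ⊆ V, and let φ be a formula that depends only on V \ A. If some subset E₀ ⊆ A is a positive explanation for (Γ, A, φ), then every subset E ⊆ A is a positive explanation for (Γ, A, φ). Consequently, the set of positive explanations of (Γ, A, φ) is either empty or equal to the entire powerset of A; in particular, when A is finite, the number of positive explanations is either 0 or 2^|A|, and the number of subset-minimal positive explanations is either 0 or 1. -/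
section Abduction

variable {V : Type*} {Γ : Set ((V → Bool) → Bool)}

theorem SatKB.mono (hΓ : ∀ γ ∈ Γ, Monotone γ) {σ τ : V → Bool} (hσ : SatKB Γ σ)
    (hστ : σ ≤ τ) : SatKB Γ τ := fun γ hγ =>
  le_antisymm (Bool.le_true _) (hσ γ hγ ▸ hΓ γ hγ hστ)

theorem sup_indicator_eq_true {σ : V → Bool} {S : Set V} [DecidablePred (· ∈ S)] {x : V}
    (hx : x ∈ S) : (σ ⊔ fun v => decide (v ∈ S)) x = true := by
  simp [Pi.sup_apply, hx]

theorem IsPosExplanation.of_subset (hΓ : ∀ γ ∈ Γ, Monotone γ) {A : Set V}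
    {φ : (V → Bool) → Bool} (hφ : ∀ σ τ : V → Bool, (∀ v ∉ A, σ v = τ v) → φ σ = φ τ)
    {E₀ : Set V} (hE₀ : IsPosExplanation Γ A φ E₀) {E : Set V} (hEA : E ⊆ A) :
    IsPosExplanation Γ A φ E := by
  classical
  obtain ⟨hE₀A, ⟨σ₀, hσ₀, -⟩, hentails⟩ := hE₀
  refine ⟨hEA, ⟨σ₀ ⊔ fun v => decide (v ∈ E), hσ₀.mono hΓ le_sup_left,
    fun x hx => sup_indicator_eq_true hx⟩, fun σ hσ _ => ?_⟩
  have hφA : φ (σ ⊔ fun v => decide (v ∈ A)) = true :=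
    hentails _ (hσ.mono hΓ le_sup_left) fun x hx => sup_indicator_eq_true (hE₀A hx)
  rwa [hφ σ (σ ⊔ fun v => decide (v ∈ A)) fun v hv => by simp [hv]]

end Abduction

theorem Nat.card_subtype_subset_eq_two_pow {α : Type*} {A : Set α} (hA : A.Finite) :
    Nat.card {E : Set α // E ⊆ A} = 2 ^ Nat.card A :=
  Set.ncard_powerset A hA

theorem Nat.card_minimal_eq_one_of_empty {α : Type*} {P : Set α → Prop} (h : P ∅) :
    Nat.card {E : Set α // P E ∧ ∀ E' : Set α, E' ⊂ E → ¬ P E'} = 1 := by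
  refine Nat.card_eq_one_iff_exists.mpr
    ⟨⟨∅, h, fun E' hE' => absurd (Set.empty_subset E') hE'.2⟩, ?_⟩
  rintro ⟨E, -, hmin⟩
  ext1
  by_contra hE
  exact hmin ∅ (Set.empty_ssubset.mpr (Set.nonempty_iff_ne_empty.mpr hE)) h

theorem stmt_16_general (V : Type*) (Γ : Set ((V → Bool) → Bool))
    (hmono : ∀ γ ∈ Γ, ∀ σ τ : V → Bool, (∀ v, σ v ≤ τ v) → γ σ ≤ γ τ)
    (A : Set V) (φ : (V → Bool) → Bool)
    (hdep : ∀ σ τ : V → Bool, (∀ v ∉ A, σ v = τ v) → φ σ = φ τ) :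
    (∀ E₀ : Set V, IsPosExplanation Γ A φ E₀ →
        ∀ E ⊆ A, IsPosExplanation Γ A φ E) ∧
    ({E : Set V | IsPosExplanation Γ A φ E} = ∅ ∨
        {E : Set V | IsPosExplanation Γ A φ E} = {E : Set V | E ⊆ A}) ∧
    (A.Finite →
      (Nat.card {E : Set V // IsPosExplanation Γ A φ E} = 0 ∨
        Nat.card {E : Set V // IsPosExplanation Γ A φ E} = 2 ^ Nat.card A) ∧
      (Nat.card {E : Set V // IsPosExplanation Γ A φ E ∧
            ∀ E' : Set V, E' ⊂ E → ¬ IsPosExplanation Γ A φ E'} = 0 ∨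
        Nat.card {E : Set V // IsPosExplanation Γ A φ E ∧
            ∀ E' : Set V, E' ⊂ E → ¬ IsPosExplanation Γ A φ E'} = 1)) := by
  have hall : ∀ E₀ : Set V, IsPosExplanation Γ A φ E₀ → ∀ E ⊆ A, IsPosExplanation Γ A φ E :=
    fun _ hE₀ _ hEA => hE₀.of_subset (fun γ hγ σ τ => hmono γ hγ σ τ) hdep hEA
  by_cases hex : ∃ E₀, IsPosExplanation Γ A φ E₀
  · obtain ⟨E₀, hE₀⟩ := hex
    have hiff : ∀ E, IsPosExplanation Γ A φ E ↔ E ⊆ A := fun E => ⟨(·.1), hall E₀ hE₀ E⟩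
    refine ⟨hall, Or.inr (Set.ext hiff), fun hA => ⟨Or.inr ?_, Or.inr ?_⟩⟩
    · rw [Nat.card_congr (Equiv.subtypeEquivRight hiff), Nat.card_subtype_subset_eq_two_pow hA]
    · exact Nat.card_minimal_eq_one_of_empty ((hiff ∅).mpr (Set.empty_subset A))
  · push Not at hex
    refine ⟨fun E₀ hE₀ => absurd hE₀ (hex E₀), Or.inl (Set.eq_empty_of_forall_notMem hex),
      fun _ => ⟨Or.inl ?_, Or.inl ?_⟩⟩
    · exact @Nat.card_of_isEmpty _ (Subtype.isEmpty_of_false hex)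
    · exact @Nat.card_of_isEmpty _ (Subtype.isEmpty_of_false fun E hE => hex E hE.1)

/-- For a monotone knowledge base and a manifestation depending only on `V \ A`, if one
subset of `A` is a positive explanation then every subset is; hence the positive
explanations form either `∅` or the full powerset of `A`, and for finite `A` their number
is `0` or `2 ^ |A|`, while the number of subset-minimal positive explanations is `0` or
`1`. -/
theorem stmt_16 (V : Type*) (Γ : Set ((V → Bool) → Bool)) (hΓfin : Γ.Finite)
    (hmono : ∀ γ ∈ Γ, ∀ σ τ : V → Bool, (∀ v, σ v ≤ τ v) → γ σ ≤ γ τ)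
    (A : Set V) (φ : (V → Bool) → Bool)
    (hdep : ∀ σ τ : V → Bool, (∀ v ∉ A, σ v = τ v) → φ σ = φ τ) :
    (∀ E₀ : Set V, IsPosExplanation Γ A φ E₀ →
        ∀ E ⊆ A, IsPosExplanation Γ A φ E) ∧
    ({E : Set V | IsPosExplanation Γ A φ E} = ∅ ∨
        {E : Set V | IsPosExplanation Γ A φ E} = {E : Set V | E ⊆ A}) ∧
    (A.Finite →
      (Nat.card {E : Set V // IsPosExplanation Γ A φ E} = 0 ∨
        Nat.card {E : Set V // IsPosExplanation Γ A φ E} = 2 ^ Nat.card A) ∧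
      (Nat.card {E : Set V // IsPosExplanation Γ A φ E ∧
            ∀ E' : Set V, E' ⊂ E → ¬ IsPosExplanation Γ A φ E'} = 0 ∨
        Nat.card {E : Set V // IsPosExplanation Γ A φ E ∧
            ∀ E' : Set V, E' ⊂ E → ¬ IsPosExplanation Γ A φ E'} = 1)) :=
  stmt_16_general V Γ hmono A φ hdep
end
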